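/- arXiv:1805.08334 — 8 statements merged into one kernel-verified Lean document; each statement's English description precedes it below -/
import Mathlib

section
/- Given a quantum c-coloring {P_{v,k}} of a graph G with adjacency matrix A, the pinching defined by the projectors P_k = Σ_{v∈V} e_v e_v† ⊗ P_{v,k} annihilates A ⊗ I_d, i.e., Σ_{k∈[c]} P_k (A ⊗ I_d) P_k = 0. -/
open Matrix BigOperators Kronecker

/-- A quantum `c`-coloring of `G` in dimension `d`. -/
def IsQuantumColoring {n d c : ℕ} (G : SimpleGraph (Fin n))
    (P : Fin n → Fin c → Matrix (Fin d) (Fin d) ℂ) : Prop :=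
  (∀ v k, (P v k).IsHermitian) ∧
  (∀ v k, P v k * P v k = P v k) ∧
  (∀ v, ∑ k, P v k = 1) ∧
  (∀ v w, G.Adj v w → ∀ k, P v k * P w k = 0)

/-! The `(v, w)` block of `P_k (A ⊗ I) P_k` is `A v w • P v k * P w k`: it vanishes for
non-adjacent `v, w` because `A v w = 0`, and for adjacent ones by orthogonality of the coloring. -/

theorem Matrix.sum_single_kronecker_mul_kronecker_one_mul {ι m R : Type*}
    [Fintype ι] [DecidableEq ι] [Fintype m] [DecidableEq m] [CommSemiring R]
    (M : Matrix ι ι R) (Q S : ι → Matrix m m R) :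
    (∑ v, single v v (1 : R) ⊗ₖ Q v) * (M ⊗ₖ (1 : Matrix m m R)) *
        (∑ w, single w w (1 : R) ⊗ₖ S w) =
      ∑ v, ∑ w, single v w (M v w) ⊗ₖ (Q v * S w) := by
  rw [Finset.sum_mul, Finset.sum_mul]
  refine Finset.sum_congr rfl fun v _ => ?_
  rw [Finset.mul_sum]
  refine Finset.sum_congr rfl fun w _ => ?_
  rw [← mul_kronecker_mul, ← mul_kronecker_mul, mul_one, single_mul_mul_single, one_mul,
    mul_one]

/-- The pinching induced by a quantum coloring annihilates `A ⊗ I_d`. -/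
theorem pinching_annihilates_adjMatrix {n d c : ℕ} (G : SimpleGraph (Fin n))
    [DecidableRel G.Adj]
    (P : Fin n → Fin c → Matrix (Fin d) (Fin d) ℂ)
    (hP : IsQuantumColoring G P) :
    ∑ k : Fin c,
      (∑ v, Matrix.single v v (1 : ℂ) ⊗ₖ P v k) *
        (G.adjMatrix ℂ ⊗ₖ (1 : Matrix (Fin d) (Fin d) ℂ)) *
        (∑ v, Matrix.single v v (1 : ℂ) ⊗ₖ P v k) = 0 := by
  obtain ⟨-, -, -, horth⟩ := hP
  refine Finset.sum_eq_zero fun k _ => ?_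
  rw [sum_single_kronecker_mul_kronecker_one_mul]
  refine Finset.sum_eq_zero fun v _ => Finset.sum_eq_zero fun w _ => ?_
  by_cases hvw : G.Adj v w
  · rw [horth v w hvw k, kronecker_zero]
  · rw [SimpleGraph.adjMatrix_apply, if_neg hvw, single_zero, zero_kronecker]
end

section
/- If a graph G admits a quantum c-coloring in dimension d, then there exists a unitary matrix U ∈ C^{nd×nd} such that Σ_{ℓ∈[c]} U^ℓ (A ⊗ I_d) (U†)^ℓ = 0, where A is the adjacency matrix of G. -/
open Matrix BigOperators Kronecker

section Aux

variable {d c : ℕ}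

/-- If a finite sum of matrices of the form `Mᴴ * M` is zero, each `M` is zero. -/
lemma aux_sum_conjTranspose_mul_self_eq_zero {ι : Type*} (s : Finset ι)
    (M : ι → Matrix (Fin d) (Fin d) ℂ)
    (h : ∑ k ∈ s, (M k)ᴴ * M k = 0) : ∀ k ∈ s, M k = 0 := by
  have htr : ∀ k, Matrix.trace ((M k)ᴴ * M k)
      = ((∑ i, ∑ j, Complex.normSq (M k j i) : ℝ) : ℂ) := by
    intro k
    simp only [Matrix.trace, Matrix.diag, Matrix.mul_apply, Matrix.conjTranspose_apply,
      Complex.star_def]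
    push_cast
    congr 1
    ext i
    congr 1
    ext j
    rw [Complex.normSq_eq_conj_mul_self]
  have h0 : ∑ k ∈ s, (∑ i, ∑ j, Complex.normSq (M k j i) : ℝ) = 0 := by
    have := congrArg Matrix.trace h
    rw [Matrix.trace_sum, Matrix.trace_zero] at this
    simp_rw [htr] at this
    exact_mod_cast this
  intro k hk
  have hk0 : (∑ i, ∑ j, Complex.normSq (M k j i) : ℝ) = 0 := by
    refine (Finset.sum_eq_zero_iff_of_nonneg ?_).mp h0 k hk
    intro x _
    exact Finset.sum_nonneg fun _ _ => Finset.sum_nonneg fun _ _ => Complex.normSq_nonneg _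
  ext j i
  have hne : Complex.normSq (M k j i) = 0 := by
    have h1 := (Finset.sum_eq_zero_iff_of_nonneg
        (fun x _ => Finset.sum_nonneg fun _ _ => Complex.normSq_nonneg _)).mp hk0 i
        (Finset.mem_univ i)
    exact (Finset.sum_eq_zero_iff_of_nonneg (fun x _ => Complex.normSq_nonneg _)).mp h1 j
      (Finset.mem_univ j)
  simpa using Complex.normSq_eq_zero.mp hne

/-- Hermitian idempotents summing to the identity are mutually orthogonal. -/
lemma aux_proj_orth (Q : Fin c → Matrix (Fin d) (Fin d) ℂ)
    (hherm : ∀ k, (Q k).IsHermitian) (hidem : ∀ k, Q k * Q k = Q k)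
    (hsum : ∑ k, Q k = 1) : ∀ k j, k ≠ j → Q k * Q j = 0 := by
  intro k j hkj
  have h1 : ∑ m, Q j * Q m * Q j = Q j := by
    calc ∑ m, Q j * Q m * Q j = Q j * (∑ m, Q m) * Q j := by
          rw [Finset.mul_sum, Finset.sum_mul]
      _ = Q j := by rw [hsum, mul_one, hidem]
  have h2 : ∑ m ∈ Finset.univ.erase j, Q j * Q m * Q j = 0 := by
    have h4 := Finset.add_sum_erase Finset.univ (fun m => Q j * Q m * Q j) (Finset.mem_univ j)
    simp only [h1, hidem] at h4
    exact (add_eq_left).mp h4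
  have h3 : ∑ m ∈ Finset.univ.erase j, (Q m * Q j)ᴴ * (Q m * Q j) = 0 := by
    rw [← h2]
    refine Finset.sum_congr rfl fun m _ => ?_
    rw [conjTranspose_mul, (hherm m).eq, (hherm j).eq]
    calc Q j * Q m * (Q m * Q j) = Q j * (Q m * Q m) * Q j := by noncomm_ring
      _ = Q j * Q m * Q j := by rw [hidem]
  exact aux_sum_conjTranspose_mul_self_eq_zero _ _ h3 k
    (Finset.mem_erase.mpr ⟨hkj, Finset.mem_univ k⟩)

/-- Product of two weighted sums of mutually orthogonal idempotents. -/
lemma aux_sum_smul_mul (Q : Fin c → Matrix (Fin d) (Fin d) ℂ)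
    (hidem : ∀ k, Q k * Q k = Q k) (horth : ∀ k j, k ≠ j → Q k * Q j = 0)
    (y z : Fin c → ℂ) :
    (∑ k, y k • Q k) * (∑ k, z k • Q k) = ∑ k, (y k * z k) • Q k := by
  rw [Finset.sum_mul_sum]
  refine Finset.sum_congr rfl fun k _ => ?_
  rw [Finset.sum_eq_single k]
  · rw [smul_mul_smul_comm, hidem]
  · intro j _ hjk
    rw [smul_mul_smul_comm, horth k j (Ne.symm hjk), smul_zero]
  · intro hk; exact absurd (Finset.mem_univ k) hk

/-- Powers of a weighted sum of mutually orthogonal idempotents summing to one. -/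
lemma aux_pow_sum_smul (Q : Fin c → Matrix (Fin d) (Fin d) ℂ)
    (hidem : ∀ k, Q k * Q k = Q k) (horth : ∀ k j, k ≠ j → Q k * Q j = 0)
    (hsum : ∑ k, Q k = 1) (z : Fin c → ℂ) (ℓ : ℕ) :
    (∑ k, z k • Q k) ^ ℓ = ∑ k, (z k) ^ ℓ • Q k := by
  induction ℓ with
  | zero => simp [hsum]
  | succ ℓ ih =>
      rw [pow_succ, ih, aux_sum_smul_mul Q hidem horth]
      exact Finset.sum_congr rfl fun k _ => by rw [pow_succ]

end Aux

section Roots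

open Complex

variable {c : ℕ}

/-- The conjugate of the basic root of unity is its inverse. -/
lemma aux_conj_exp :
    (starRingEnd ℂ) (Complex.exp (2 * Real.pi * Complex.I / c))
      = (Complex.exp (2 * Real.pi * Complex.I / c))⁻¹ := by
  rw [← Complex.exp_conj, ← Complex.exp_neg]
  congr 1
  simp only [map_div₀, _root_.map_mul, Complex.conj_I, Complex.conj_ofReal, map_ofNat,
    Complex.conj_natCast]
  ring

/-- Sums of powers of roots of unity. -/
lemma aux_root_sum (hc : c ≠ 0) (k j : Fin c) :
    ∑ ℓ : Fin c,
        ((Complex.exp (2 * Real.pi * Complex.I / c)) ^ (k : ℕ)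
          * (starRingEnd ℂ) ((Complex.exp (2 * Real.pi * Complex.I / c)) ^ (j : ℕ))) ^ (ℓ : ℕ)
      = if k = j then (c : ℂ) else 0 := by
  set ω : ℂ := Complex.exp (2 * Real.pi * Complex.I / c) with hω
  have hω0 : ω ≠ 0 := Complex.exp_ne_zero _
  have hprim : IsPrimitiveRoot ω c := Complex.isPrimitiveRoot_exp c hc
  have hconjpow : (starRingEnd ℂ) (ω ^ (j : ℕ)) = (ω ^ (j : ℕ))⁻¹ := by
    rw [map_pow, aux_conj_exp, inv_pow]
  set z : ℂ := ω ^ (k : ℕ) * (starRingEnd ℂ) (ω ^ (j : ℕ)) with hz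
  have hzc : z ^ c = 1 := by
    rw [hz, hconjpow, mul_pow, inv_pow, ← pow_mul, ← pow_mul, mul_comm (k : ℕ) c,
      mul_comm (j : ℕ) c, pow_mul, pow_mul, hprim.pow_eq_one, one_pow, one_pow, inv_one, mul_one]
  rw [Fin.sum_univ_eq_sum_range (fun ℓ => z ^ ℓ) c]
  by_cases hkj : k = j
  · subst hkj
    have hz1 : z = 1 := by
      rw [hz, hconjpow, mul_inv_cancel₀ (pow_ne_zero _ hω0)]
    simp [hz1]
  · have hz1 : z ≠ 1 := by
      intro h
      apply hkj
      have hpow : ω ^ (k : ℕ) = ω ^ (j : ℕ) := by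
        rw [hz, hconjpow] at h
        field_simp at h
        exact h
      exact Fin.ext (hprim.pow_inj k.isLt j.isLt hpow)
    rw [geom_sum_eq hz1, hzc, sub_self, zero_div, if_neg hkj]

end Roots

section Blocks

variable {n d : ℕ}

lemma aux_block_mul_kron_left (A : Matrix (Fin n) (Fin n) ℂ)
    (C : Fin n → Matrix (Fin d) (Fin d) ℂ) (i s : Fin d) (v u : Fin n) :
    (blockDiagonal C * ((1 : Matrix (Fin d) (Fin d) ℂ) ⊗ₖ A)) (i, v) (s, u)
      = C v i s * A v u := by
  simp only [Matrix.mul_apply, kroneckerMap_apply, blockDiagonal_apply, Fintype.sum_prod_type,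
    Matrix.one_apply, ite_mul, mul_ite, zero_mul, mul_zero, one_mul]
  simp [Finset.sum_ite_eq, Finset.sum_ite_eq']

/-- Entrywise description of `blockDiagonal C * (1 ⊗ₖ A) * blockDiagonal D`. -/
lemma aux_block_mul_kron (A : Matrix (Fin n) (Fin n) ℂ)
    (C D : Fin n → Matrix (Fin d) (Fin d) ℂ) (i j : Fin d) (v w : Fin n) :
    (blockDiagonal C * ((1 : Matrix (Fin d) (Fin d) ℂ) ⊗ₖ A) * blockDiagonal D) (i, v) (j, w)
      = A v w * (C v * D w) i j := by
  rw [Matrix.mul_apply]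
  rw [Fintype.sum_prod_type]
  simp only [aux_block_mul_kron_left, blockDiagonal_apply]
  simp only [mul_ite, mul_zero, Finset.sum_ite_eq', Finset.mem_univ, if_true]
  rw [Matrix.mul_apply, Finset.mul_sum]
  exact Finset.sum_congr rfl fun s _ => by ring

end Blocks

/-- A quantum `c`-coloring yields a unitary `U` whose twirling annihilates `A ⊗ I_d`. -/
theorem exists_unitary_twirling_annihilates {n d c : ℕ} (G : SimpleGraph (Fin n))
    [DecidableRel G.Adj]
    (P : Fin n → Fin c → Matrix (Fin d) (Fin d) ℂ)
    (hP : IsQuantumColoring G P) :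
    ∃ U : Matrix (Fin n × Fin d) (Fin n × Fin d) ℂ,
      U ∈ Matrix.unitaryGroup (Fin n × Fin d) ℂ ∧
      ∑ ℓ : Fin c,
        U ^ (ℓ : ℕ) * (G.adjMatrix ℂ ⊗ₖ (1 : Matrix (Fin d) (Fin d) ℂ)) * (Uᴴ) ^ (ℓ : ℕ)
          = 0 := by
  obtain ⟨hherm, hidem, hsum, hadj⟩ := hP
  rcases Nat.eq_zero_or_pos c with rfl | hcpos
  · exact ⟨1, one_mem _, by simp⟩
  have hc0 : c ≠ 0 := hcpos.ne'
  set ω : ℂ := Complex.exp (2 * Real.pi * Complex.I / c) with hω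
  set B : Fin n → Matrix (Fin d) (Fin d) ℂ := fun v => ∑ k : Fin c, (ω ^ (k : ℕ)) • P v k with hB
  have horth : ∀ v, ∀ k j, k ≠ j → P v k * P v j = 0 := fun v =>
    aux_proj_orth (P v) (hherm v) (hidem v) (hsum v)
  have hBH : ∀ v, (B v)ᴴ = ∑ k : Fin c, ((starRingEnd ℂ) (ω ^ (k : ℕ))) • P v k := by
    intro v
    rw [hB]
    rw [conjTranspose_sum]
    refine Finset.sum_congr rfl fun k _ => ?_
    rw [conjTranspose_smul, (hherm v k).eq, Complex.star_def]
  have hωm : ∀ m : ℕ, ω ^ m * (starRingEnd ℂ) (ω ^ m) = 1 := by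
    intro m
    rw [map_pow, aux_conj_exp, inv_pow, mul_inv_cancel₀ (pow_ne_zero _ (Complex.exp_ne_zero _))]
  have hBBH : ∀ v, B v * (B v)ᴴ = 1 := by
    intro v
    rw [hBH v, hB, aux_sum_smul_mul (P v) (hidem v) (horth v)]
    calc ∑ k : Fin c, (ω ^ (k : ℕ) * (starRingEnd ℂ) (ω ^ (k : ℕ))) • P v k
        = ∑ k : Fin c, P v k := Finset.sum_congr rfl fun k _ => by rw [hωm, one_smul]
      _ = 1 := hsum v
  -- the blockDiagonal matrix and reindexing
  set e : (Fin d × Fin n) ≃ (Fin n × Fin d) := Equiv.prodComm _ _ with he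
  set V : Matrix (Fin d × Fin n) (Fin d × Fin n) ℂ := blockDiagonal B with hV
  set U : Matrix (Fin n × Fin d) (Fin n × Fin d) ℂ := (Matrix.reindexAlgEquiv ℂ ℂ e) V with hU
  have hUH : Uᴴ = (Matrix.reindexAlgEquiv ℂ ℂ e) (Vᴴ) := by
    rw [hU, Matrix.reindexAlgEquiv_apply, Matrix.reindexAlgEquiv_apply,
      Matrix.conjTranspose_reindex]
  refine ⟨U, ?_, ?_⟩
  · rw [Matrix.mem_unitaryGroup_iff, Matrix.star_eq_conjTranspose, hUH, hU, ← _root_.map_mul]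
    have hVV : V * Vᴴ = 1 := by
      rw [hV, blockDiagonal_conjTranspose, ← blockDiagonal_mul]
      rw [show (fun k => B k * (B k)ᴴ) = fun _ => (1 : Matrix (Fin d) (Fin d) ℂ) from
        funext fun v => hBBH v]
      exact blockDiagonal_one
    rw [hVV, _root_.map_one]
  · -- the twirling sum
    have hKer : (G.adjMatrix ℂ ⊗ₖ (1 : Matrix (Fin d) (Fin d) ℂ))
        = (Matrix.reindexAlgEquiv ℂ ℂ e) ((1 : Matrix (Fin d) (Fin d) ℂ) ⊗ₖ G.adjMatrix ℂ) := by
      ext ⟨v, i⟩ ⟨w, j⟩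
      simp [Matrix.reindexAlgEquiv_apply, Matrix.reindex_apply, Matrix.submatrix_apply,
        kroneckerMap_apply, he, mul_comm]
    have hkey : ∀ v w, G.Adj v w →
        ∑ ℓ : Fin c, B v ^ (ℓ : ℕ) * ((B w)ᴴ) ^ (ℓ : ℕ) = 0 := by
      intro v w hvw
      have h1 : ∀ ℓ : ℕ, B v ^ ℓ = ∑ k : Fin c, (ω ^ (k : ℕ)) ^ ℓ • P v k := by
        intro ℓ
        rw [hB]
        exact aux_pow_sum_smul (P v) (hidem v) (horth v) (hsum v) _ ℓ
      have h2 : ∀ ℓ : ℕ, ((B w)ᴴ) ^ ℓ = ∑ k : Fin c, ((starRingEnd ℂ) (ω ^ (k : ℕ))) ^ ℓ • P w k := by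
        intro ℓ
        rw [hBH w]
        exact aux_pow_sum_smul (P w) (hidem w) (horth w) (hsum w) _ ℓ
      calc ∑ ℓ : Fin c, B v ^ (ℓ : ℕ) * ((B w)ᴴ) ^ (ℓ : ℕ)
          = ∑ ℓ : Fin c, ∑ k : Fin c, ∑ k' : Fin c,
              ((ω ^ (k : ℕ) * (starRingEnd ℂ) (ω ^ (k' : ℕ))) ^ (ℓ : ℕ)) • (P v k * P w k') := by
            refine Finset.sum_congr rfl fun ℓ _ => ?_
            rw [h1, h2, Finset.sum_mul_sum]
            refine Finset.sum_congr rfl fun k _ => Finset.sum_congr rfl fun k' _ => ?_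
            rw [smul_mul_smul_comm, mul_pow]
        _ = ∑ k : Fin c, ∑ k' : Fin c,
              (∑ ℓ : Fin c, (ω ^ (k : ℕ) * (starRingEnd ℂ) (ω ^ (k' : ℕ))) ^ (ℓ : ℕ))
                • (P v k * P w k') := by
            rw [Finset.sum_comm]
            refine Finset.sum_congr rfl fun k _ => ?_
            rw [Finset.sum_comm]
            refine Finset.sum_congr rfl fun k' _ => ?_
            rw [Finset.sum_smul]
        _ = 0 := by
            refine Finset.sum_eq_zero fun k _ => Finset.sum_eq_zero fun k' _ => ?_
            rw [hω, aux_root_sum hc0 k k']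
            by_cases hkk : k = k'
            · subst hkk
              rw [if_pos rfl, hadj v w hvw k, smul_zero]
            · rw [if_neg hkk, zero_smul]
    have hinner : ∑ ℓ : Fin c,
        V ^ (ℓ : ℕ) * ((1 : Matrix (Fin d) (Fin d) ℂ) ⊗ₖ G.adjMatrix ℂ) * (Vᴴ) ^ (ℓ : ℕ) = 0 := by
      have hVp : ∀ ℓ : ℕ, V ^ ℓ = blockDiagonal (fun v => B v ^ ℓ) := by
        intro ℓ; rw [hV, ← blockDiagonal_pow]; rfl
      have hVHp : ∀ ℓ : ℕ, (Vᴴ) ^ ℓ = blockDiagonal (fun v => ((B v)ᴴ) ^ ℓ) := by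
        intro ℓ; rw [hV, blockDiagonal_conjTranspose, ← blockDiagonal_pow]; rfl
      ext ⟨i, v⟩ ⟨j, w⟩
      rw [Matrix.sum_apply, Matrix.zero_apply]
      calc ∑ ℓ : Fin c,
            (V ^ (ℓ:ℕ) * ((1 : Matrix (Fin d) (Fin d) ℂ) ⊗ₖ G.adjMatrix ℂ) * (Vᴴ) ^ (ℓ:ℕ))
              (i, v) (j, w)
          = ∑ ℓ : Fin c, G.adjMatrix ℂ v w * (B v ^ (ℓ:ℕ) * ((B w)ᴴ) ^ (ℓ:ℕ)) i j := by
            refine Finset.sum_congr rfl fun ℓ _ => ?_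
            rw [hVp, hVHp, aux_block_mul_kron]
        _ = G.adjMatrix ℂ v w
              * (∑ ℓ : Fin c, B v ^ (ℓ:ℕ) * ((B w)ᴴ) ^ (ℓ:ℕ)) i j := by
            rw [Matrix.sum_apply, Finset.mul_sum]
        _ = 0 := by
            by_cases hvw : G.Adj v w
            · rw [hkey v w hvw, Matrix.zero_apply, mul_zero]
            · rw [SimpleGraph.adjMatrix_apply, if_neg hvw, zero_mul]
    calc ∑ ℓ : Fin c,
          U ^ (ℓ : ℕ) * (G.adjMatrix ℂ ⊗ₖ (1 : Matrix (Fin d) (Fin d) ℂ)) * (Uᴴ) ^ (ℓ : ℕ)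
        = (Matrix.reindexAlgEquiv ℂ ℂ e) (∑ ℓ : Fin c,
            V ^ (ℓ : ℕ) * ((1 : Matrix (Fin d) (Fin d) ℂ) ⊗ₖ G.adjMatrix ℂ) * (Vᴴ) ^ (ℓ : ℕ)) := by
          rw [map_sum]
          refine Finset.sum_congr rfl fun ℓ _ => ?_
          rw [hU, hUH, hKer, ← map_pow, ← map_pow, ← _root_.map_mul, ← _root_.map_mul]
      _ = 0 := by rw [hinner, _root_.map_zero]
end

section
/- Suppose P_0,...,P_{c-1} ∈ C^{nd×nd} are orthogonal projectors, each block-diagonal with diagonal blocks P_{v,k} ∈ C^{d×d} indexed by the vertices v of a graph G, such that Σ_{k∈[c]} P_k = I_{nd} and Σ_{k∈[c]} P_k (A ⊗ I_d) P_k = 0, where A is the adjacency matrix of G. Then the collection {P_{v,k}} is a quantum c-coloring of G; in particular P_{v,k} P_{w,k} = 0 for every edge vw and every k. -/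
open Matrix BigOperators Kronecker

/-!
Reading the pinching identity off at the `(v, w)` block of an edge gives
`∑ₖ P_{v,k} P_{w,k} = 0`. For orthogonal projections `P, Q` one has
`tr (P Q) = tr ((Q P)ᴴ (Q P)) = ‖Q P‖_F² ≥ 0`, so taking traces forces every
`P_{v,k} P_{w,k}` to vanish.
-/

open scoped ComplexOrder

namespace Matrix

section StarProjection

variable {𝕜 m : Type*} [RCLike 𝕜] [Fintype m]

theorem trace_mul_eq_trace_conjTranspose_mul_self {P Q : Matrix m m 𝕜}
    (hP : IsStarProjection P) (hQ : IsStarProjection Q) :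
    (P * Q).trace = ((Q * P)ᴴ * (Q * P)).trace := by
  have hPh : Pᴴ = P := hP.isSelfAdjoint
  have hQh : Qᴴ = Q := hQ.isSelfAdjoint
  rw [conjTranspose_mul, hPh, hQh, mul_assoc P, ← mul_assoc Q, hQ.isIdempotentElem.eq,
    ← mul_assoc, trace_mul_comm (P * Q) P, ← mul_assoc, hP.isIdempotentElem.eq]

theorem mul_eq_zero_of_sum_mul_eq_zero {ι : Type*} [Fintype ι] {P Q : ι → Matrix m m 𝕜}
    (hP : ∀ k, IsStarProjection (P k)) (hQ : ∀ k, IsStarProjection (Q k))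
    (h : ∑ k, P k * Q k = 0) (k : ι) : P k * Q k = 0 := by
  have htrace : ∑ k, ((Q k * P k)ᴴ * (Q k * P k)).trace = 0 := by
    simp_rw [← trace_mul_eq_trace_conjTranspose_mul_self (hP _) (hQ _), ← trace_sum, h,
      trace_zero]
  have hQP : Q k * P k = 0 := trace_conjTranspose_mul_self_eq_zero_iff.mp <|
    (Finset.sum_eq_zero_iff_of_nonneg fun k _ =>
      (posSemidef_conjTranspose_mul_self _).trace_nonneg).mp htrace k (Finset.mem_univ k)
  have hPh : (P k)ᴴ = P k := (hP k).isSelfAdjoint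
  have hQh : (Q k)ᴴ = Q k := (hQ k).isSelfAdjoint
  simpa [hPh, hQh] using congr_arg conjTranspose hQP

end StarProjection

section BlockDiagonal

variable {ι m n R : Type*} [Fintype ι] [DecidableEq ι]

theorem sum_single_kronecker_apply [Semiring R] (B : ι → Matrix m n R) (a b : ι)
    (i : m) (j : n) :
    (∑ v, single v v (1 : R) ⊗ₖ B v) (a, i) (b, j) = if a = b then B a i j else 0 := by
  simp [sum_apply, kroneckerMap_apply, single, ite_and]

theorem sum_single_kronecker_mul_kronecker_one_mul_apply [CommSemiring R] [Fintype m]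
    [DecidableEq m] [Fintype n] (A : Matrix ι ι R) (B : ι → Matrix n m R)
    (C : ι → Matrix m n R)
    (a b : ι) (i j : n) :
    ((∑ v, single v v (1 : R) ⊗ₖ B v) * (A ⊗ₖ (1 : Matrix m m R)) *
        (∑ v, single v v (1 : R) ⊗ₖ C v)) (a, i) (b, j) = A a b * (B a * C b) i j := by
  simp [mul_apply, Fintype.sum_prod_type, sum_single_kronecker_apply, kroneckerMap_apply,
    one_apply, Finset.mul_sum, mul_left_comm, mul_comm]

end BlockDiagonal

end Matrix

/-- If the block-diagonal projectors `P_k` form a resolution of the identity and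
the associated pinching annihilates `A ⊗ I_d`, then the blocks `P_{v,k}` form a
quantum `c`-coloring of `G`; in particular `P_{v,k} P_{w,k} = 0` on edges. -/
theorem quantum_coloring_of_annihilating_pinching {n d c : ℕ}
    (G : SimpleGraph (Fin n)) [DecidableRel G.Adj]
    (P : Fin n → Fin c → Matrix (Fin d) (Fin d) ℂ)
    (hherm : ∀ v k, (P v k).IsHermitian)
    (hidem : ∀ v k, P v k * P v k = P v k)
    (hsum : ∑ k : Fin c, (∑ v, Matrix.single v v (1 : ℂ) ⊗ₖ P v k) = 1)
    (hpinch : ∑ k : Fin c,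
      (∑ v, Matrix.single v v (1 : ℂ) ⊗ₖ P v k) *
        (G.adjMatrix ℂ ⊗ₖ (1 : Matrix (Fin d) (Fin d) ℂ)) *
        (∑ v, Matrix.single v v (1 : ℂ) ⊗ₖ P v k) = 0) :
    IsQuantumColoring G P ∧
      ∀ v w, G.Adj v w → ∀ k, P v k * P w k = 0 := by
  have hproj : ∀ v k, IsStarProjection (P v k) := fun v k => ⟨hidem v k, hherm v k⟩
  have hresolution : ∀ v, ∑ k, P v k = 1 := fun v => by
    ext i j
    have hentry := congr_fun₂ hsum (v, i) (v, j)
    rw [Matrix.sum_apply] at hentry ⊢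
    simpa [sum_single_kronecker_apply, one_apply] using hentry
  have hedge : ∀ v w, G.Adj v w → ∀ k, P v k * P w k = 0 := fun v w hvw =>
    mul_eq_zero_of_sum_mul_eq_zero (hproj v) (hproj w) <| by
      ext i j
      have hentry := congr_fun₂ hpinch (v, i) (w, j)
      rw [Matrix.sum_apply] at hentry ⊢
      simpa [sum_single_kronecker_mul_kronecker_one_mul_apply, hvw] using hentry
  exact ⟨⟨hherm, hidem, hresolution, hedge⟩, hedge⟩
end

section
/- Let G be a graph with m ≥ 1 edges, adjacency matrix A, degree matrix D, and signless Laplacian Q = D + A with minimum eigenvalue δ_n. If G admits a quantum c-coloring (in some dimension d), then c ≥ 1 + 2m/(2m − n·δ_n). In particular, χ_q(G) ≥ 1 + 2m/(2m − n·δ_n). -/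
/-!
For a colour `k`, view the Hermitian matrices `X v = c • P v k - 1` as vectors of a real inner
product space. Since `Q - δₙ • 1` is positive semidefinite, any vectors `y v` satisfy
`δₙ ∑ ‖y u‖² ≤ ∑ Q u v ⟪y u, y v⟫`, and the right side is half the sum of `‖y u + y v‖²` over
ordered adjacent pairs. The projector relations give `∑ₖ ‖X v‖² = d c (c - 1)` and, for adjacent
`u`, `v`, `∑ₖ ‖X u + X v‖² = 2 d c (c - 2)`. Summing over the colours yields
`n δₙ d c (c - 1) ≤ 2 m d c (c - 2)`, which rearranges to the bound.
-/

open Matrix BigOperators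

open scoped InnerProductSpace

section Spectral

variable {V E : Type*} [Fintype V] [NormedAddCommGroup E] [InnerProductSpace ℝ E]

open scoped MatrixOrder Matrix.Norms.L2Operator in
theorem Matrix.PosSemidef.sum_mul_inner_nonneg {M : Matrix V V ℝ} (hM : M.PosSemidef)
    (y : V → E) : 0 ≤ ∑ u, ∑ v, M u v * ⟪y u, y v⟫_ℝ := by
  classical
  obtain ⟨B, rfl⟩ := CStarAlgebra.nonneg_iff_eq_star_mul_self.mp hM.nonneg
  set z : V → E := fun i => ∑ u, B i u • y u
  have hz : ∑ u, ∑ v, (star B * B) u v * ⟪y u, y v⟫_ℝ = ∑ i, ⟪z i, z i⟫_ℝ := by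
    simp only [z, sum_inner, inner_sum, real_inner_smul_left, real_inner_smul_right,
      star_eq_conjTranspose, mul_apply, conjTranspose_apply, star_trivial, Finset.sum_mul]
    refine (Finset.sum_congr rfl fun u _ => Finset.sum_comm).trans (Finset.sum_comm.trans ?_)
    exact Finset.sum_congr rfl fun i _ => Finset.sum_congr rfl fun u _ =>
      Finset.sum_congr rfl fun v _ => by rw [real_inner_comm, mul_assoc]
  rw [hz]
  exact Finset.sum_nonneg fun i _ => real_inner_self_nonneg

variable [DecidableEq V]

open scoped MatrixOrder Matrix.Norms.L2Operator in
theorem Matrix.IsHermitian.posSemidef_sub_iInf_eigenvalues_smul_one {A : Matrix V V ℝ}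
    (hA : A.IsHermitian) : (A - (⨅ i, hA.eigenvalues i) • 1).PosSemidef := by
  rw [← Matrix.le_iff, ← Algebra.algebraMap_eq_smul_one, algebraMap_le_iff_le_spectrum,
    hA.spectrum_real_eq_range_eigenvalues]
  rintro _ ⟨i, rfl⟩
  exact ciInf_le (Set.finite_range _).bddBelow i

theorem Matrix.IsHermitian.iInf_eigenvalues_mul_sum_norm_sq_le {A : Matrix V V ℝ}
    (hA : A.IsHermitian) (y : V → E) :
    (⨅ i, hA.eigenvalues i) * ∑ u, ‖y u‖ ^ 2 ≤ ∑ u, ∑ v, A u v * ⟪y u, y v⟫_ℝ := by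
  have h := hA.posSemidef_sub_iInf_eigenvalues_smul_one.sum_mul_inner_nonneg y
  simp only [sub_apply, smul_apply, one_apply, sub_mul, Finset.sum_sub_distrib, smul_eq_mul,
    mul_ite, mul_one, mul_zero, ite_mul, zero_mul, Finset.sum_ite_eq, Finset.mem_univ, if_true,
    real_inner_self_eq_norm_sq, ← Finset.mul_sum] at h
  linarith

end Spectral

def SimpleGraph.signlessLapMatrix {V : Type*} [Fintype V] [DecidableEq V] (G : SimpleGraph V)
    [DecidableRel G.Adj] (R : Type*) [AddMonoidWithOne R] : Matrix V V R :=
  G.degMatrix R + G.adjMatrix R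

namespace SimpleGraph

variable {V : Type*} [Fintype V] (G : SimpleGraph V) [DecidableRel G.Adj]

theorem sum_sum_ite_adj_const (K : ℝ) :
    ∑ u, ∑ v, (if G.Adj u v then K else 0) = 2 * G.edgeFinset.card * K := by
  have hboole (u v : V) : (if G.Adj u v then K else 0) = (if G.Adj u v then 1 else 0) * K :=
    (boole_mul _ _).symm
  simp only [hboole, ← Finset.sum_mul, ← degree_eq_sum_if_adj, ← Nat.cast_sum,
    sum_degrees_eq_twice_card_edges, Nat.cast_mul, Nat.cast_ofNat]

variable [DecidableEq V] {E : Type*} [NormedAddCommGroup E] [InnerProductSpace ℝ E]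

theorem sum_signlessLapMatrix_mul_inner (y : V → E) :
    ∑ u, ∑ v, G.signlessLapMatrix ℝ u v * ⟪y u, y v⟫_ℝ
      = (∑ u, ∑ v, if G.Adj u v then ‖y u + y v‖ ^ 2 else 0) / 2 := by
  have hdeg : ∑ u, ∑ v, (if G.Adj u v then ‖y u‖ ^ 2 else 0)
      = ∑ u, (G.degree u : ℝ) * ⟪y u, y u⟫_ℝ := by
    simp only [degree_eq_sum_if_adj, Finset.sum_mul, ite_mul, one_mul, zero_mul,
      real_inner_self_eq_norm_sq]
  have hswap : ∑ u, ∑ v, (if G.Adj u v then ‖y v‖ ^ 2 else 0)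
      = ∑ u, ∑ v, (if G.Adj u v then ‖y u‖ ^ 2 else 0) := by
    rw [Finset.sum_comm]
    exact Finset.sum_congr rfl fun u _ => Finset.sum_congr rfl fun v _ =>
      if_congr (G.adj_comm _ _) rfl rfl
  have hlhs : ∑ u, ∑ v, G.signlessLapMatrix ℝ u v * ⟪y u, y v⟫_ℝ
      = ∑ u, (G.degree u : ℝ) * ⟪y u, y u⟫_ℝ
        + ∑ u, ∑ v, (if G.Adj u v then ⟪y u, y v⟫_ℝ else 0) := by
    simp only [signlessLapMatrix, degMatrix, Matrix.add_apply, diagonal_apply, adjMatrix_apply,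
      add_mul, ite_mul, zero_mul, one_mul, Finset.sum_add_distrib, Finset.sum_ite_eq,
      Finset.mem_univ, if_true]
  have htwo : ∑ u, ∑ v, (if G.Adj u v then 2 * ⟪y u, y v⟫_ℝ else 0)
      = 2 * ∑ u, ∑ v, (if G.Adj u v then ⟪y u, y v⟫_ℝ else 0) := by
    simp only [Finset.mul_sum, mul_ite, mul_zero]
  simp only [norm_add_sq_real, ite_add_zero, Finset.sum_add_distrib, hswap, hlhs, hdeg, htwo]
  ring

theorem iInf_eigenvalues_signlessLapMatrix_mul_sum_norm_sq_le
    (hQ : (G.signlessLapMatrix ℝ).IsHermitian) (y : V → E) :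
    (⨅ i, hQ.eigenvalues i) * ∑ u, ‖y u‖ ^ 2
      ≤ (∑ u, ∑ v, if G.Adj u v then ‖y u + y v‖ ^ 2 else 0) / 2 :=
  (hQ.iInf_eigenvalues_mul_sum_norm_sq_le y).trans_eq (G.sum_signlessLapMatrix_mul_inner y)

end SimpleGraph

theorem norm_toLp_vec_sq {𝕜 m n : Type*} [RCLike 𝕜] [Fintype m] [Fintype n] (X : Matrix m n 𝕜) :
    ‖(WithLp.toLp 2 X.vec : EuclideanSpace 𝕜 (n × m))‖ ^ 2 = RCLike.re (Xᴴ * X).trace := by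
  rw [@norm_sq_eq_re_inner 𝕜, EuclideanSpace.inner_eq_star_dotProduct, dotProduct_comm,
    WithLp.ofLp_toLp, star_vec_dotProduct_vec]

section Idempotent

variable {R A : Type*} [CommRing R] [Ring A] [Algebra R A] {p q : A}

theorem IsIdempotentElem.smul_sub_one_mul_self (hp : IsIdempotentElem p) (c : R) :
    (c • p - 1) * (c • p - 1) = (c ^ 2 - 2 * c) • p + 1 := by
  simp only [sub_mul, mul_sub, smul_mul_assoc, mul_smul_comm, one_mul, mul_one, hp.eq]
  module

theorem IsIdempotentElem.add_smul_sub_one_mul_self (hp : IsIdempotentElem p)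
    (hq : IsIdempotentElem q) (hpq : p * q = 0) (hqp : q * p = 0) (c : R) :
    (c • p - 1 + (c • q - 1)) * (c • p - 1 + (c • q - 1))
      = (c ^ 2 - 4 * c) • (p + q) + (4 : R) • 1 := by
  simp only [add_mul, mul_add, sub_mul, mul_sub, smul_mul_assoc, mul_smul_comm, one_mul, mul_one,
    hp.eq, hq.eq, hpq, hqp, smul_zero]
  module

end Idempotent

namespace IsQuantumColoring

variable {n d c : ℕ} {G : SimpleGraph (Fin n)} {P : Fin n → Fin c → Matrix (Fin d) (Fin d) ℂ}

theorem pos (hP : IsQuantumColoring G P) (hd : 0 < d) (v : Fin n) : 0 < c := by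
  obtain ⟨-, -, hsum, -⟩ := hP
  have : Nonempty (Fin d) := ⟨⟨0, hd⟩⟩
  refine Nat.pos_of_ne_zero fun hc => ?_
  subst hc
  simpa using hsum v

theorem sum_trace (hP : IsQuantumColoring G P) (v : Fin n) : ∑ k, (P v k).trace = d := by
  obtain ⟨-, -, hsum, -⟩ := hP
  rw [← trace_sum, hsum v, trace_one, Fintype.card_fin]

theorem conjTranspose_smul_sub_one (hP : IsQuantumColoring G P) (v : Fin n) (k : Fin c) :
    ((c : ℂ) • P v k - 1)ᴴ = (c : ℂ) • P v k - 1 := by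
  obtain ⟨hherm, -, -, -⟩ := hP
  rw [conjTranspose_sub, conjTranspose_smul, (hherm v k).eq, conjTranspose_one, Complex.star_def,
    Complex.conj_natCast]

theorem sum_trace_sq (hP : IsQuantumColoring G P) (v : Fin n) :
    ∑ k, (((c : ℂ) • P v k - 1)ᴴ * ((c : ℂ) • P v k - 1)).trace = (d * c * (c - 1) : ℂ) := by
  have hidem : ∀ v k, IsIdempotentElem (P v k) := hP.2.1
  simp only [hP.conjTranspose_smul_sub_one, IsIdempotentElem.smul_sub_one_mul_self (hidem v _),
    trace_add, trace_smul, trace_one, smul_eq_mul, Finset.sum_add_distrib, ← Finset.mul_sum,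
    hP.sum_trace, Fintype.card_fin, Finset.sum_const, Finset.card_univ, nsmul_eq_mul]
  ring

theorem sum_trace_add_sq (hP : IsQuantumColoring G P) {u v : Fin n} (huv : G.Adj u v) :
    ∑ k, (((c : ℂ) • P u k - 1 + ((c : ℂ) • P v k - 1))ᴴ *
      ((c : ℂ) • P u k - 1 + ((c : ℂ) • P v k - 1))).trace = (2 * d * c * (c - 2) : ℂ) := by
  have hidem : ∀ v k, IsIdempotentElem (P v k) := hP.2.1
  have horth : ∀ v w, G.Adj v w → ∀ k, P v k * P w k = 0 := hP.2.2.2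
  simp only [conjTranspose_add, hP.conjTranspose_smul_sub_one,
    IsIdempotentElem.add_smul_sub_one_mul_self (hidem u _) (hidem v _) (horth u v huv _)
      (horth v u huv.symm _),
    trace_add, trace_smul, trace_one, smul_eq_mul, Finset.sum_add_distrib, ← Finset.mul_sum,
    hP.sum_trace, Fintype.card_fin, Finset.sum_const, Finset.card_univ, nsmul_eq_mul]
  ring

theorem mul_iInf_eigenvalues_le [DecidableRel G.Adj] (hP : IsQuantumColoring G P)
    (hQ : (G.signlessLapMatrix ℝ).IsHermitian) :
    n * (⨅ i, hQ.eigenvalues i) * (d * c * (c - 1))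
      ≤ G.edgeFinset.card * (2 * d * c * (c - 2)) := by
  set y : Fin c → Fin n → EuclideanSpace ℂ (Fin d × Fin d) :=
    fun k v => WithLp.toLp 2 ((c : ℂ) • P v k - 1).vec
  have hnorm (v : Fin n) : ∑ k, ‖y k v‖ ^ 2 = d * c * (c - 1) := by
    simp only [y, norm_toLp_vec_sq, RCLike.re_to_complex, ← Complex.re_sum, hP.sum_trace_sq]
    simp
  have hnorm_add (u v : Fin n) (huv : G.Adj u v) :
      ∑ k, ‖y k u + y k v‖ ^ 2 = 2 * d * c * (c - 2) := by
    simp only [y, ← WithLp.toLp_add, ← vec_add, norm_toLp_vec_sq, RCLike.re_to_complex,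
      ← Complex.re_sum, hP.sum_trace_add_sq huv]
    simp
  calc (n : ℝ) * (⨅ i, hQ.eigenvalues i) * (d * c * (c - 1))
      = ∑ k, (⨅ i, hQ.eigenvalues i) * ∑ v, ‖y k v‖ ^ 2 := by
        rw [← Finset.mul_sum, Finset.sum_comm]
        simp only [hnorm, Finset.sum_const, Finset.card_univ, Fintype.card_fin, nsmul_eq_mul]
        ring
    _ ≤ ∑ k, (∑ u, ∑ v, if G.Adj u v then ‖y k u + y k v‖ ^ 2 else 0) / 2 :=
        Finset.sum_le_sum fun k _ => G.iInf_eigenvalues_signlessLapMatrix_mul_sum_norm_sq_le hQ _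
    _ = (∑ u, ∑ v, if G.Adj u v then (2 * d * c * (c - 2) : ℝ) else 0) / 2 := by
        rw [← Finset.sum_div, Finset.sum_comm]
        congr 1
        refine Finset.sum_congr rfl fun u _ => ?_
        rw [Finset.sum_comm]
        refine Finset.sum_congr rfl fun v _ => ?_
        split_ifs with huv
        · exact hnorm_add u v huv
        · exact Finset.sum_const_zero
    _ = G.edgeFinset.card * (2 * d * c * (c - 2)) := by
        rw [G.sum_sum_ite_adj_const]
        ring

end IsQuantumColoring

theorem one_add_div_le_of_mul_le {m x c d : ℝ} (hm : 0 < m) (hd : 0 < d) (hc : 1 ≤ c)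
    (h : x * (d * c * (c - 1)) ≤ m * (2 * d * c * (c - 2))) : 1 + 2 * m / (2 * m - x) ≤ c := by
  have h' : 2 * m ≤ (c - 1) * (2 * m - x) := by
    have hdc : 0 < d * c := by positivity
    nlinarith
  have hden : 0 < 2 * m - x := by nlinarith
  rw [← le_sub_iff_add_le', div_le_iff₀ hden]
  linarith

/-- The Lima et al. bound for the quantum chromatic number:
`c ≥ 1 + 2m/(2m − n·δ_n)` where `δ_n` is the least eigenvalue of the signless
Laplacian `Q = D + A`. -/
theorem lima_bound_quantum {n d c : ℕ} (hd : 0 < d) (G : SimpleGraph (Fin n))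
    [DecidableRel G.Adj]
    (hm : 1 ≤ G.edgeFinset.card)
    (hQ : (Matrix.diagonal (fun v => (G.degree v : ℝ)) + G.adjMatrix ℝ).IsHermitian)
    (P : Fin n → Fin c → Matrix (Fin d) (Fin d) ℂ)
    (hP : IsQuantumColoring G P) :
    1 + 2 * (G.edgeFinset.card : ℝ) /
        (2 * (G.edgeFinset.card : ℝ) - (n : ℝ) * ⨅ i, hQ.eigenvalues i)
      ≤ (c : ℝ) := by
  obtain ⟨e, -⟩ := Finset.card_pos.mp hm
  have hc : 0 < c := e.inductionOn fun u _ => hP.pos hd u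
  exact one_add_div_le_of_mul_le (Nat.cast_pos.mpr hm) (Nat.cast_pos.mpr hd)
    (Nat.one_le_cast.mpr hc) (hP.mul_iInf_eigenvalues_le hQ)
end

section
/- Let A be a Hermitian matrix with largest eigenvalue μ_1 and smallest eigenvalue μ_n < 0. If there exist orthogonal projectors Q_0,...,Q_{c-1} forming a resolution of the identity such that Σ_{k∈[c]} Q_k A Q_k = 0, then c ≥ 1 + μ_1/|μ_n|. -/
/-!
Conjugating `μₙ ≤ A` by the self-adjoint elements `1 - c Qₖ` and summing over `k`, the identities
`∑ₖ (1 - c Qₖ) X (1 - c Qₖ) = c² ∑ₖ Qₖ X Qₖ - c X` (for `X = A` and `X = μₙ`) turn the inequality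
into `(c² - c) μₙ ≤ -c A`, i.e. `A ≤ (c - 1) |μₙ|`. Comparing with the top of the spectrum of `A`
gives `μ₁ ≤ (c - 1) |μₙ|`.
-/

open scoped MatrixOrder

theorem sum_one_sub_card_nsmul_mul_mul_eq {R ι : Type*} [Ring R] [Fintype ι] {Q : ι → R}
    (hQ : ∑ k, Q k = 1) (a : R) :
    ∑ k, (1 - Fintype.card ι • Q k) * a * (1 - Fintype.card ι • Q k) =
      Fintype.card ι ^ 2 • ∑ k, Q k * a * Q k - Fintype.card ι • a := by
  simp only [sub_mul, mul_sub, one_mul, mul_one, smul_mul_assoc, mul_smul_comm,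
    Finset.sum_sub_distrib, ← Finset.smul_sum, ← Finset.sum_mul, ← Finset.mul_sum, hQ,
    Finset.sum_const, Finset.card_univ]
  module

theorem le_algebraMap_of_sum_mul_mul_eq_zero {R ι : Type*} [Ring R] [PartialOrder R] [StarRing R]
    [StarOrderedRing R] [Algebra ℝ R] [PosSMulReflectLE ℝ R] [Fintype ι] [Nonempty ι]
    {a : R} {μ : ℝ} (ha : algebraMap ℝ R μ ≤ a) {Q : ι → R} (hQp : ∀ k, IsStarProjection (Q k))
    (hQ : ∑ k, Q k = 1) (hpinch : ∑ k, Q k * a * Q k = 0) :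
    a ≤ algebraMap ℝ R ((Fintype.card ι - 1) * -μ) := by
  set c := Fintype.card ι
  have hconj : ∑ k, (1 - c • Q k) * algebraMap ℝ R μ * (1 - c • Q k) ≤
      ∑ k, (1 - c • Q k) * a * (1 - c • Q k) :=
    Finset.sum_le_sum fun k _ =>
      IsSelfAdjoint.conjugate_le_conjugate ha (.sub (.one R) (.smul (.all c) (hQp k).isSelfAdjoint))
  have hpinch_scalar : ∑ k, Q k * algebraMap ℝ R μ * Q k = algebraMap ℝ R μ := by
    simp only [Algebra.algebraMap_eq_smul_one, mul_smul_comm, smul_mul_assoc, mul_one,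
      (hQp _).isIdempotentElem.eq, ← Finset.smul_sum, hQ]
  rw [sum_one_sub_card_nsmul_mul_mul_eq hQ, sum_one_sub_card_nsmul_mul_mul_eq hQ, hpinch,
    hpinch_scalar] at hconj
  refine le_of_smul_le_smul_left (a := (c : ℝ)) ?_ (by positivity)
  simp only [Algebra.algebraMap_eq_smul_one, smul_zero, zero_sub] at hconj ⊢
  convert le_neg_of_le_neg hconj using 1 <;> module

section Hermitian

variable {n 𝕜 : Type*} [RCLike 𝕜] [Fintype n] [DecidableEq n] {A : Matrix n n 𝕜}

theorem Matrix.IsHermitian.algebraMap_iInf_eigenvalues_le (hA : A.IsHermitian) :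
    algebraMap ℝ (Matrix n n 𝕜) (⨅ i, hA.eigenvalues i) ≤ A := by
  rw [algebraMap_le_iff_le_spectrum hA.isSelfAdjoint, hA.spectrum_real_eq_range_eigenvalues]
  rintro _ ⟨i, rfl⟩
  exact ciInf_le (Set.finite_range _).bddBelow i

theorem Matrix.IsHermitian.iSup_eigenvalues_le_of_le_algebraMap [Nonempty n] (hA : A.IsHermitian)
    {r : ℝ} (h : A ≤ algebraMap ℝ (Matrix n n 𝕜) r) : ⨆ i, hA.eigenvalues i ≤ r :=
  ciSup_le fun i =>
    (le_algebraMap_iff_spectrum_le hA.isSelfAdjoint).1 h _ (hA.eigenvalues_mem_spectrum_real i)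

end Hermitian

theorem hoffman_bound_pinching_general {m c : ℕ}
    (A : Matrix (Fin m) (Fin m) ℂ) (hA : A.IsHermitian)
    (hneg : (⨅ i, hA.eigenvalues i) < 0)
    (Q : Fin c → Matrix (Fin m) (Fin m) ℂ)
    (hherm : ∀ k, (Q k).IsHermitian)
    (hidem : ∀ k, Q k * Q k = Q k)
    (hsum : ∑ k, Q k = 1)
    (hpinch : ∑ k, Q k * A * Q k = 0) :
    1 + (⨆ i, hA.eigenvalues i) / |⨅ i, hA.eigenvalues i| ≤ (c : ℝ) := by
  have : Nonempty (Fin m) := by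
    by_contra h
    rw [not_nonempty_iff] at h
    simp [Real.iInf_of_isEmpty] at hneg
  have : Nonempty (Fin c) := by
    by_contra h
    rw [not_nonempty_iff] at h
    simp at hsum
  have hle := hA.iSup_eigenvalues_le_of_le_algebraMap <|
    le_algebraMap_of_sum_mul_mul_eq_zero hA.algebraMap_iInf_eigenvalues_le
      (fun k => ⟨hidem k, hherm k⟩) hsum hpinch
  rw [Fintype.card_fin] at hle
  rw [abs_of_neg hneg, ← le_sub_iff_add_le', div_le_iff₀ (neg_pos.2 hneg)]
  exact hle

/-- Hoffman-type bound: if a pinching by `c` projectors annihilates a Hermitian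
matrix `A` with largest eigenvalue `μ₁` and smallest eigenvalue `μ_n < 0`, then
`c ≥ 1 + μ₁/|μ_n|`. -/
theorem hoffman_bound_pinching {m c : ℕ}
    (A : Matrix (Fin m) (Fin m) ℂ) (hA : A.IsHermitian) (hAne : A ≠ 0)
    (hneg : (⨅ i, hA.eigenvalues i) < 0)
    (Q : Fin c → Matrix (Fin m) (Fin m) ℂ)
    (hherm : ∀ k, (Q k).IsHermitian)
    (hidem : ∀ k, Q k * Q k = Q k)
    (hsum : ∑ k, Q k = 1)
    (hpinch : ∑ k, Q k * A * Q k = 0) :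
    1 + (⨆ i, hA.eigenvalues i) / |⨅ i, hA.eigenvalues i| ≤ (c : ℝ) :=
  hoffman_bound_pinching_general A hA hneg Q hherm hidem hsum hpinch
end

section
/- Let A be a nonzero Hermitian matrix with n^+ positive and n^- negative eigenvalues (counted with multiplicity). If there exist orthogonal projectors Q_0,...,Q_{c-1} forming a resolution of the identity with Σ_{k∈[c]} Q_k A Q_k = 0, then c ≥ 1 + max(n^+/n^-, n^- /n^+). -/
open Matrix Finset

/-!
Diagonalize `A = U D Uᴴ`; then `R k = Uᴴ Q k U` are Hermitian, sum to `1`, and `∑ R k D R k = 0`.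
On vectors `x` supported where `D > 0`, the map sending `x` to the negative-eigenvalue coordinates
of `R 1 x, …, R (c-1) x` is injective: if these vanish, so do those of `R 0 x`, because
`∑ R k x = x`. Then `0 = ⟪x, ∑ R k D R k x⟫ = ∑ ⟪R k x, D R k x⟫` is a sum of nonnegative terms, so
the positive-eigenvalue coordinates of every `R k x` vanish too, and `x = ∑ R k x = 0`.
Counting dimensions gives `n⁺ ≤ (c - 1) n⁻`, and `-A` gives `n⁻ ≤ (c - 1) n⁺`.
-/

section Pinching

variable {ι 𝕜 : Type*} [Fintype ι] [DecidableEq ι] [RCLike 𝕜]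

theorem Matrix.star_dotProduct_diagonal_ofReal_mulVec (d : ι → ℝ) (y : ι → 𝕜) :
    star y ⬝ᵥ (diagonal (RCLike.ofReal ∘ d) *ᵥ y) = ((∑ i, d i * ‖y i‖ ^ 2 : ℝ) : 𝕜) := by
  simp only [dotProduct, mulVec_diagonal, Function.comp_apply, Pi.star_apply, RCLike.star_def]
  push_cast
  refine sum_congr rfl fun i _ => ?_
  rw [← RCLike.conj_mul]
  ring

variable {c : ℕ} {d : ι → ℝ} {R : Fin (c + 1) → Matrix ι ι 𝕜}

theorem sum_quadratic_form_eq_zero_of_pinching (hR : ∀ k, (R k).IsHermitian)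
    (hpinch : ∑ k, R k * diagonal (RCLike.ofReal ∘ d) * R k = 0) (x : ι → 𝕜) :
    ∑ k, ∑ i, d i * ‖(R k *ᵥ x) i‖ ^ 2 = 0 := by
  have h := congrArg (fun M => star x ⬝ᵥ (M *ᵥ x)) hpinch
  simp only [sum_mulVec, dotProduct_sum, zero_mulVec, dotProduct_zero] at h
  have hterm : ∀ k, star x ⬝ᵥ ((R k * diagonal (RCLike.ofReal ∘ d) * R k) *ᵥ x)
      = star (R k *ᵥ x) ⬝ᵥ (diagonal (RCLike.ofReal ∘ d) *ᵥ (R k *ᵥ x)) := by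
    intro k
    rw [← mulVec_mulVec, ← mulVec_mulVec, dotProduct_mulVec, star_mulVec, (hR k).eq]
  simp only [hterm, star_dotProduct_diagonal_ofReal_mulVec] at h
  exact_mod_cast h

theorem eq_zero_of_pinching_of_mulVec_succ_eq_zero (hR : ∀ k, (R k).IsHermitian)
    (hsum : ∑ k, R k = 1) (hpinch : ∑ k, R k * diagonal (RCLike.ofReal ∘ d) * R k = 0)
    {x : ι → 𝕜} (hx : ∀ i, d i ≤ 0 → x i = 0)
    (hsucc : ∀ (k : Fin c) i, d i < 0 → (R k.succ *ᵥ x) i = 0) : x = 0 := by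
  have hsum_x : ∑ k, R k *ᵥ x = x := by rw [← sum_mulVec, hsum, one_mulVec]
  have hneg : ∀ k i, d i < 0 → (R k *ᵥ x) i = 0 := by
    refine Fin.cases (fun i hi => ?_) hsucc
    have h := congrFun hsum_x i
    rwa [Finset.sum_apply, Fin.sum_univ_succ, sum_eq_zero fun k _ => hsucc k i hi, add_zero,
      hx i hi.le] at h
  have hnonneg : ∀ k i, 0 ≤ d i * ‖(R k *ᵥ x) i‖ ^ 2 := by
    intro k i
    rcases lt_or_ge (d i) 0 with hi | hi
    · simp [hneg k i hi]
    · positivity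
  have hpos : ∀ k i, 0 < d i → (R k *ᵥ x) i = 0 := by
    intro k i hi
    have h := sum_quadratic_form_eq_zero_of_pinching hR hpinch x
    rw [Fintype.sum_eq_zero_iff_of_nonneg fun k => sum_nonneg fun i _ => hnonneg k i] at h
    have hk := congrFun h k
    rw [Pi.zero_apply, Fintype.sum_eq_zero_iff_of_nonneg (hnonneg k)] at hk
    simpa [hi.ne'] using congrFun hk i
  ext i
  rcases le_or_gt (d i) 0 with hi | hi
  · exact hx i hi
  · rw [← hsum_x, Finset.sum_apply]
    exact sum_eq_zero fun k _ => hpos k i hi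

theorem card_pos_le_mul_card_neg_of_pinching (hR : ∀ k, (R k).IsHermitian)
    (hsum : ∑ k, R k = 1) (hpinch : ∑ k, R k * diagonal (RCLike.ofReal ∘ d) * R k = 0) :
    #{i | 0 < d i} ≤ c * #{i | d i < 0} := by
  let extend := Function.ExtendByZero.linearMap 𝕜 (Subtype.val : {i // 0 < d i} → ι)
  let Φ : ({i // 0 < d i} → 𝕜) →ₗ[𝕜] Fin c → {i // d i < 0} → 𝕜 :=
    LinearMap.pi fun k => LinearMap.funLeft 𝕜 𝕜 Subtype.val ∘ₗ (R k.succ).mulVecLin ∘ₗ extend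
  have hΦ : Function.Injective Φ := by
    rw [← LinearMap.ker_eq_bot, LinearMap.ker_eq_bot']
    intro x hx
    have hext : extend x = 0 := by
      refine eq_zero_of_pinching_of_mulVec_succ_eq_zero hR hsum hpinch (fun i hi => ?_)
        fun k i hi => congrFun (congrFun hx k) ⟨i, hi⟩
      exact Function.extend_apply' _ _ _ fun ⟨j, hj⟩ => hi.not_gt (hj ▸ j.2)
    funext j
    simpa [extend, Subtype.val_injective.extend_apply] using congrFun hext j
  simpa [Fintype.card_subtype, Module.finrank_pi_fintype] using
    LinearMap.finrank_le_finrank_of_injective hΦ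

theorem card_neg_le_mul_card_pos_of_pinching (hR : ∀ k, (R k).IsHermitian)
    (hsum : ∑ k, R k = 1) (hpinch : ∑ k, R k * diagonal (RCLike.ofReal ∘ d) * R k = 0) :
    #{i | d i < 0} ≤ c * #{i | 0 < d i} := by
  have hpinch_neg : ∑ k, R k * diagonal (RCLike.ofReal ∘ (-d)) * R k = 0 := by
    have : diagonal (RCLike.ofReal ∘ (-d) : ι → 𝕜) = -diagonal (RCLike.ofReal ∘ d) := by
      ext i j
      by_cases h : i = j <;> simp [h]
    simp only [this, mul_neg, neg_mul, sum_neg_distrib, hpinch, neg_zero]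
  simpa using card_pos_le_mul_card_neg_of_pinching hR hsum hpinch_neg

end Pinching

theorem one_add_max_div_le_of_le_mul {p q c : ℕ} (hp : p ≤ c * q) (hq : q ≤ c * p)
    (hpq : 0 < p + q) : 1 + max ((p : ℝ) / q) ((q : ℝ) / p) ≤ c + 1 := by
  have hp0 : (0 : ℝ) < p := by norm_cast; nlinarith
  have hq0 : (0 : ℝ) < q := by norm_cast; nlinarith
  have hmax : max ((p : ℝ) / q) ((q : ℝ) / p) ≤ c :=
    max_le ((div_le_iff₀ hq0).2 (by exact_mod_cast hp)) ((div_le_iff₀ hp0).2 (by exact_mod_cast hq))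
  linarith

theorem card_pos_add_card_neg_pos_of_ne_zero {ι : Type*} [Fintype ι] {d : ι → ℝ} (hd : d ≠ 0) :
    0 < #{i | 0 < d i} + #{i | d i < 0} := by
  obtain ⟨i, hi⟩ := Function.ne_iff.1 hd
  rcases hi.lt_or_gt with hi | hi
  · exact Nat.add_pos_right _ (card_pos.2 ⟨i, by simpa using hi⟩)
  · exact Nat.add_pos_left (card_pos.2 ⟨i, by simpa using hi⟩) _

theorem inertia_bound_pinching_general {m c : ℕ}
    (A : Matrix (Fin m) (Fin m) ℂ) (hA : A.IsHermitian) (hAne : A ≠ 0)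
    (Q : Fin c → Matrix (Fin m) (Fin m) ℂ)
    (hherm : ∀ k, (Q k).IsHermitian)
    (hsum : ∑ k, Q k = 1)
    (hpinch : ∑ k, Q k * A * Q k = 0) :
    1 + max
        (((univ.filter fun i => 0 < hA.eigenvalues i).card : ℝ) /
          ((univ.filter fun i => hA.eigenvalues i < 0).card : ℝ))
        (((univ.filter fun i => hA.eigenvalues i < 0).card : ℝ) /
          ((univ.filter fun i => 0 < hA.eigenvalues i).card : ℝ))
      ≤ (c : ℝ) := by
  obtain ⟨c, rfl⟩ : ∃ c', c = c' + 1 := Nat.exists_eq_succ_of_ne_zero <| by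
    rintro rfl
    exact hAne (by rw [← mul_one A, ← hsum]; simp)
  let φ := Unitary.conjStarAlgAut ℂ _ (star hA.eigenvectorUnitary)
  have hR : ∀ k, (φ (Q k)).IsHermitian := fun k =>
    isHermitian_iff_isSelfAdjoint.2 ((isHermitian_iff_isSelfAdjoint.1 (hherm k)).map φ)
  have hRsum : ∑ k, φ (Q k) = 1 := by rw [← map_sum, hsum, map_one]
  have hRpinch : ∑ k, φ (Q k) * diagonal (RCLike.ofReal ∘ hA.eigenvalues) * φ (Q k) = 0 := by
    rw [← hA.conjStarAlgAut_star_eigenvectorUnitary]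
    simp only [φ, ← map_mul, ← map_sum, hpinch, map_zero]
  push_cast
  exact one_add_max_div_le_of_le_mul (card_pos_le_mul_card_neg_of_pinching hR hRsum hRpinch)
    (card_neg_le_mul_card_pos_of_pinching hR hRsum hRpinch)
    (card_pos_add_card_neg_pos_of_ne_zero (hA.eigenvalues_eq_zero_iff.not.2 hAne))

/-- Inertia-type bound: if a pinching by `c` projectors annihilates a nonzero
Hermitian matrix `A` with `n⁺` positive and `n⁻` negative eigenvalues, then
`c ≥ 1 + max(n⁺/n⁻, n⁻/n⁺)`. -/
theorem inertia_bound_pinching {m c : ℕ}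
    (A : Matrix (Fin m) (Fin m) ℂ) (hA : A.IsHermitian) (hAne : A ≠ 0)
    (Q : Fin c → Matrix (Fin m) (Fin m) ℂ)
    (hherm : ∀ k, (Q k).IsHermitian)
    (hidem : ∀ k, Q k * Q k = Q k)
    (hsum : ∑ k, Q k = 1)
    (hpinch : ∑ k, Q k * A * Q k = 0) :
    1 + max
        (((univ.filter fun i => 0 < hA.eigenvalues i).card : ℝ) /
          ((univ.filter fun i => hA.eigenvalues i < 0).card : ℝ))
        (((univ.filter fun i => hA.eigenvalues i < 0).card : ℝ) /
          ((univ.filter fun i => 0 < hA.eigenvalues i).card : ℝ))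
      ≤ (c : ℝ) :=
  inertia_bound_pinching_general A hA hAne Q hherm hsum hpinch
end

section
/- If a graph G is complete on n ≥ 2 vertices, then any quantum c-coloring of K_n requires c ≥ n; i.e., χ_q(K_n) = n. -/
/-!
For a clique `s` and a colour `k`, the projections `P v k` with `v ∈ s` are pairwise orthogonal,
so `Q k = ∑ v ∈ s, P v k` is again a projection and `Q k ≤ 1`. Summing over the colours,
`|s| • 1 = ∑ k, Q k ≤ c • 1`, and taking traces in dimension `d > 0` gives `|s| ≤ c`.
Thus `ω(G) ≤ χ_q(G) ≤ χ(G)`, and for `K_n` both ends equal `n`.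
-/

open Matrix BigOperators

/-- The quantum chromatic number: the least `c` admitting a quantum `c`-coloring
in some dimension `d > 0`. -/
noncomputable def quantumChromaticNumber {n : ℕ} (G : SimpleGraph (Fin n)) : ℕ :=
  sInf {c | ∃ d, 0 < d ∧
    ∃ P : Fin n → Fin c → Matrix (Fin d) (Fin d) ℂ, IsQuantumColoring G P}

open scoped MatrixOrder ComplexOrder

theorem isStarProjection_sum_of_pairwise_mul_eq_zero {R ι : Type*} [Semiring R] [StarRing R]
    {p : ι → R} {s : Finset ι} (hp : ∀ i ∈ s, IsStarProjection (p i))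
    (horth : (s : Set ι).Pairwise (p · * p · = 0)) : IsStarProjection (∑ i ∈ s, p i) := by
  have he : OrthogonalIdempotents (fun i : s => p i) :=
    ⟨fun i => (hp i i.2).isIdempotentElem,
      fun i j hij => horth i.2 j.2 (Subtype.coe_ne_coe.mpr hij)⟩
  rw [← Finset.sum_coe_sort s]
  exact ⟨he.isIdempotentElem_sum, isSelfAdjoint_sum _ fun i _ => (hp i i.2).isSelfAdjoint⟩

namespace IsQuantumColoring

variable {n d c : ℕ} {G : SimpleGraph (Fin n)} {P : Fin n → Fin c → Matrix (Fin d) (Fin d) ℂ}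

theorem isStarProjection (hP : IsQuantumColoring G P) (v : Fin n) (k : Fin c) :
    IsStarProjection (P v k) :=
  ⟨hP.2.1 v k, hP.1 v k⟩

theorem sum_le_one_of_isClique (hP : IsQuantumColoring G P) {s : Finset (Fin n)}
    (hs : G.IsClique (s : Set (Fin n))) (k : Fin c) : ∑ v ∈ s, P v k ≤ 1 :=
  (isStarProjection_sum_of_pairwise_mul_eq_zero (fun v _ => hP.isStarProjection v k)
    fun _ hv _ hw hvw => hP.2.2.2 _ _ (hs hv hw hvw) k).le_one

theorem card_le_of_isClique (hP : IsQuantumColoring G P) (hd : 0 < d) {s : Finset (Fin n)}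
    (hs : G.IsClique (s : Set (Fin n))) : s.card ≤ c := by
  have hle : s.card • (1 : Matrix (Fin d) (Fin d) ℂ) ≤ c • 1 :=
    calc s.card • (1 : Matrix (Fin d) (Fin d) ℂ) = ∑ k, ∑ v ∈ s, P v k := by
          rw [Finset.sum_comm]; simp [hP.2.2.1]
      _ ≤ ∑ _k : Fin c, 1 := Finset.sum_le_sum fun k _ => hP.sum_le_one_of_isClique hs k
      _ = c • 1 := by simp
  have htrace : ((s.card * d : ℕ) : ℂ) ≤ (c * d : ℕ) := by
    have := OrderHomClass.mono (tracePositiveLinearMap (Fin d) ℂ ℂ) hle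
    rw [tracePositiveLinearMap_apply, tracePositiveLinearMap_apply, trace_smul, trace_smul,
      trace_one, Fintype.card_fin] at this
    simpa only [nsmul_eq_mul, Nat.cast_mul] using this
  exact Nat.le_of_mul_le_mul_right (Nat.cast_le.mp htrace) hd

theorem ofColoring (C : G.Coloring (Fin c)) :
    IsQuantumColoring G fun v k => if C v = k then (1 : Matrix (Fin d) (Fin d) ℂ) else 0 := by
  refine ⟨fun v k => ?_, fun v k => ?_, fun v => by simp, fun v w hvw k => ?_⟩
  · dsimp only; split_ifs <;> simp
  · dsimp only; split_ifs <;> simp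
  · have := C.valid hvw
    dsimp only; split_ifs <;> simp_all

end IsQuantumColoring

theorem quantumChromaticNumber_le_of_colorable {n c : ℕ} {G : SimpleGraph (Fin n)}
    (hG : G.Colorable c) : quantumChromaticNumber G ≤ c :=
  let ⟨C⟩ := hG
  Nat.sInf_le ⟨1, one_pos, _, .ofColoring C⟩

theorem card_le_quantumChromaticNumber_of_isClique {n : ℕ} {G : SimpleGraph (Fin n)}
    {s : Finset (Fin n)} (hs : G.IsClique (s : Set (Fin n))) :
    s.card ≤ quantumChromaticNumber G :=
  le_csInf ⟨n, 1, one_pos, _, .ofColoring G.selfColoring⟩ fun _ ⟨_, hd, _, hP⟩ =>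
    hP.card_le_of_isClique hd hs

theorem quantum_chromatic_complete_general {n : ℕ} :
    (∀ c d : ℕ, 0 < d →
      ∀ P : Fin n → Fin c → Matrix (Fin d) (Fin d) ℂ,
        IsQuantumColoring (⊤ : SimpleGraph (Fin n)) P → n ≤ c) ∧
    quantumChromaticNumber (⊤ : SimpleGraph (Fin n)) = n := by
  have hK : (⊤ : SimpleGraph (Fin n)).IsClique (Finset.univ : Finset (Fin n)) :=
    SimpleGraph.IsClique.top _
  refine ⟨fun c d hd P hP => by simpa using hP.card_le_of_isClique hd hK, le_antisymm ?_ ?_⟩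
  · simpa using
      quantumChromaticNumber_le_of_colorable (⊤ : SimpleGraph (Fin n)).selfColoring.colorable
  · simpa using card_le_quantumChromaticNumber_of_isClique hK

/-- Any quantum `c`-coloring of the complete graph `K_n` (`n ≥ 2`) requires
`c ≥ n`; consequently `χ_q(K_n) = n`. -/
theorem quantum_chromatic_complete {n : ℕ} (hn : 2 ≤ n) :
    (∀ c d : ℕ, 0 < d →
      ∀ P : Fin n → Fin c → Matrix (Fin d) (Fin d) ℂ,
        IsQuantumColoring (⊤ : SimpleGraph (Fin n)) P → n ≤ c) ∧
    quantumChromaticNumber (⊤ : SimpleGraph (Fin n)) = n :=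
  quantum_chromatic_complete_general
end

section
/- Let G be a graph with adjacency matrix A, largest eigenvalue μ_1, Laplacian eigenvalue θ_1 = λ_max(D−A), and signless Laplacian eigenvalue δ_1 = λ_max(D+A). If G admits a quantum c-coloring, then c ≥ 1 + μ_1/(μ_1 − δ_1 + θ_1); hence χ_q(G) ≥ 1 + μ_1/(μ_1 − δ_1 + θ_1). -/
/-!
Put `R = θ₁ I - L`: it is positive semidefinite and vanishes off the diagonal and the edges.
The blocks `Π_k = ∑_v E_vv ⊗ P_{v,k}` are orthogonal projections summing to `I`, and since
`P_{v,k} P_{w,k} = 0` along edges, the pinching `∑_k Π_k (R ⊗ I) Π_k` equals `diag R ⊗ I`.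
The pinching inequality `X ≤ c ∑_k Π_k X Π_k` for `X ≥ 0`, evaluated at `y ⊗ e`, thus gives
`yᵀ R y ≤ c yᵀ (diag R) y` for every real `y`. For a unit top eigenvector `y` of `Q = D + A`,
with `t = yᵀ D y` and `a = yᵀ A y`, this reads `θ₁ - t + a ≤ c (θ₁ - t)`, where `t + a = δ₁`
and `a ≤ μ₁`; as `c ≥ 2` (there is an edge), this rearranges to the bound.
-/

open Matrix BigOperators

open scoped MatrixOrder ComplexOrder Kronecker

namespace Matrix

variable {n 𝕜 : Type*} [Fintype n] [DecidableEq n] [RCLike 𝕜]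

theorem IsHermitian.le_iSup_eigenvalues_smul_one {M : Matrix n n 𝕜} (hM : M.IsHermitian) :
    M ≤ (⨆ i, hM.eigenvalues i) • (1 : Matrix n n 𝕜) := by
  rw [← Algebra.algebraMap_eq_smul_one]
  refine le_algebraMap_of_spectrum_le (fun x hx => ?_) hM.isSelfAdjoint
  obtain ⟨i, rfl⟩ := hM.spectrum_real_eq_range_eigenvalues ▸ hx
  exact le_ciSup (Set.finite_range _).bddAbove i

theorem dotProduct_smul_one_sub_mulVec {R : Type*} [CommRing R] (r : R) (M : Matrix n n R)
    (y : n → R) : y ⬝ᵥ (r • 1 - M) *ᵥ y = r * (y ⬝ᵥ y) - y ⬝ᵥ M *ᵥ y := by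
  rw [sub_mulVec, dotProduct_sub, smul_mulVec, one_mulVec, dotProduct_smul, smul_eq_mul]

theorem IsHermitian.exists_dotProduct_self_eq_one_mulVec_eq_iSup [Nonempty n]
    {M : Matrix n n ℝ} (hM : M.IsHermitian) :
    ∃ y : n → ℝ, y ⬝ᵥ y = 1 ∧ M *ᵥ y = (⨆ i, hM.eigenvalues i) • y := by
  obtain ⟨i, hi⟩ := exists_eq_ciSup_of_finite (f := hM.eigenvalues)
  refine ⟨hM.eigenvectorBasis i, ?_, hi ▸ hM.mulVec_eigenvectorBasis i⟩
  have h := orthonormal_iff_ite.mp hM.eigenvectorBasis.orthonormal i i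
  rwa [if_pos rfl, EuclideanSpace.inner_eq_star_dotProduct, star_trivial, dotProduct_comm] at h

theorem PosSemidef.map_ofReal {R : Matrix n n ℝ} (hR : R.PosSemidef) :
    (R.map ((↑) : ℝ → 𝕜)).PosSemidef := by
  open scoped Matrix.Norms.L2Operator in
  obtain ⟨B, rfl⟩ := CStarAlgebra.nonneg_iff_eq_star_mul_self.mp hR.nonneg
  rw [star_eq_conjTranspose, Matrix.map_mul (f := (algebraMap ℝ 𝕜 : ℝ →+* 𝕜)),
    conjTranspose_map _ (by intro; simp)]
  exact posSemidef_conjTranspose_mul_self _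

/-- The pinching inequality. -/
theorem PosSemidef.le_card_smul_sum_conj {ι : Type*} [Fintype ι] {X : Matrix n n 𝕜}
    (hX : X.PosSemidef) {C : ι → Matrix n n 𝕜} (hC : ∀ k, (C k).IsHermitian)
    (hsum : ∑ k, C k = 1) :
    X ≤ Fintype.card ι • ∑ k, C k * X * C k := by
  have hexpand : ∑ k, ∑ l, (C k - C l)ᴴ * X * (C k - C l)
      = 2 • (Fintype.card ι • ∑ k, C k * X * C k - X) := by
    simp only [conjTranspose_sub, (hC _).eq, sub_mul, mul_sub, Finset.sum_sub_distrib,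
      Finset.sum_const, Finset.card_univ, ← Finset.sum_mul, ← Finset.mul_sum, hsum,
      Matrix.one_mul, Matrix.mul_one]
    rw [← Finset.smul_sum]
    abel
  have hpsd : (∑ k, ∑ l, (C k - C l)ᴴ * X * (C k - C l)).PosSemidef :=
    posSemidef_sum _ fun k _ => posSemidef_sum _ fun l _ => hX.conjTranspose_mul_mul_same _
  rw [hexpand] at hpsd
  have h := hpsd.smul (a := (2⁻¹ : ℝ)) (by positivity)
  rwa [← ofNat_smul_eq_nsmul ℝ, smul_smul, inv_mul_cancel₀ two_ne_zero, one_smul] at h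

section Kronecker

variable {V m : Type*} [Fintype V] [Fintype m]

theorem kronecker_mulVec_mul (S : Matrix V V 𝕜) (B : Matrix m m 𝕜) (x : V → 𝕜) (e : m → 𝕜) :
    (S ⊗ₖ B) *ᵥ (fun p : V × m => x p.1 * e p.2) = fun p => (S *ᵥ x) p.1 * (B *ᵥ e) p.2 := by
  ext p
  simp only [mulVec, dotProduct, Finset.sum_mul_sum, Fintype.sum_prod_type, kroneckerMap_apply]
  exact Finset.sum_congr rfl fun _ _ => Finset.sum_congr rfl fun _ _ => by ring

theorem dotProduct_mul_mul (x y : V → 𝕜) (e f : m → 𝕜) :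
    (fun p : V × m => x p.1 * e p.2) ⬝ᵥ (fun p => y p.1 * f p.2) = (x ⬝ᵥ y) * (e ⬝ᵥ f) := by
  simp only [dotProduct, Finset.sum_mul_sum, Fintype.sum_prod_type]
  exact Finset.sum_congr rfl fun _ _ => Finset.sum_congr rfl fun _ _ => by ring

theorem star_dotProduct_kronecker_mulVec (S : Matrix V V 𝕜) (B : Matrix m m 𝕜) (x : V → 𝕜)
    (e : m → 𝕜) :
    star (fun p : V × m => x p.1 * e p.2) ⬝ᵥ (S ⊗ₖ B) *ᵥ (fun p => x p.1 * e p.2) =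
      (star x ⬝ᵥ S *ᵥ x) * (star e ⬝ᵥ B *ᵥ e) := by
  rw [kronecker_mulVec_mul, ← dotProduct_mul_mul]
  congr 1
  ext p
  simp

theorem star_dotProduct_map_ofReal_kronecker_one_mulVec [DecidableEq m] (S : Matrix V V ℝ)
    (y : V → ℝ) {e : m → 𝕜} (he : star e ⬝ᵥ e = 1) :
    star (fun p : V × m => (y p.1 : 𝕜) * e p.2) ⬝ᵥ (S.map (↑) ⊗ₖ 1) *ᵥ
      (fun p => (y p.1 : 𝕜) * e p.2) = ((y ⬝ᵥ S *ᵥ y : ℝ) : 𝕜) := by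
  rw [star_dotProduct_kronecker_mulVec _ _ (fun v => (y v : 𝕜)), one_mulVec, he, mul_one]
  simp [dotProduct, mulVec, Finset.mul_sum]

end Kronecker

end Matrix

section ColorProjection

variable {V m ι 𝕜 : Type*} [DecidableEq V] [RCLike 𝕜]
  {P : V → ι → Matrix m m 𝕜}

/-- `∑_v E_vv ⊗ P v k`, as a matrix indexed by `V × m`. -/
def colorProjection (P : V → ι → Matrix m m 𝕜) (k : ι) : Matrix (V × m) (V × m) 𝕜 :=
  comp V V m m 𝕜 (diagonal fun v => P v k)

theorem isHermitian_colorProjection (hP : ∀ v k, (P v k).IsHermitian) (k : ι) :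
    (colorProjection P k).IsHermitian := by
  ext ⟨v, i⟩ ⟨w, j⟩
  by_cases h : v = w
  · subst h
    simpa [colorProjection] using congrFun₂ (hP v k) i j
  · simp [colorProjection, h, Ne.symm h]

variable [DecidableEq m] [Fintype ι]

theorem sum_colorProjection (hP : ∀ v, ∑ k, P v k = 1) : ∑ k, colorProjection P k = 1 := by
  ext ⟨v, i⟩ ⟨w, j⟩
  by_cases h : v = w
  · subst h
    simpa [colorProjection, Matrix.sum_apply, one_apply] using congrFun₂ (hP v) i j
  · simp [colorProjection, Matrix.sum_apply, h, one_apply]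

variable [Fintype V] [Fintype m]

theorem sum_colorProjection_mul_kronecker_one_mul (G : SimpleGraph V)
    (hidem : ∀ v k, P v k * P v k = P v k) (hsum : ∀ v, ∑ k, P v k = 1)
    (horth : ∀ v w, G.Adj v w → ∀ k, P v k * P w k = 0)
    {R : Matrix V V 𝕜} (hR : ∀ v w, v ≠ w → ¬G.Adj v w → R v w = 0) :
    ∑ k, colorProjection P k * (R ⊗ₖ 1) * colorProjection P k = diagonal R.diag ⊗ₖ 1 := by
  have hcomp (A : Matrix V V 𝕜) :
      A ⊗ₖ (1 : Matrix m m 𝕜) = comp V V m m 𝕜 (A.map (· • 1)) := by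
    ext ⟨v, i⟩ ⟨w, j⟩
    simp
  simp only [hcomp, colorProjection, ← compRingEquiv_apply, ← map_mul, ← map_sum]
  congr 1
  ext1 v w
  simp only [diagonal_mul, mul_diagonal, Matrix.sum_apply, Matrix.map_apply, smul_mul_assoc,
    mul_smul_comm, Matrix.mul_one, ← Finset.smul_sum]
  by_cases hvw : v = w
  · subst hvw
    simp [hidem, hsum]
  by_cases hadj : G.Adj v w
  · simp [horth v w hadj, hvw]
  · simp [hR v w hvw hadj, hvw]

theorem dotProduct_mulVec_le_card_mul (G : SimpleGraph V) [Nonempty m]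
    (hherm : ∀ v k, (P v k).IsHermitian) (hidem : ∀ v k, P v k * P v k = P v k)
    (hsum : ∀ v, ∑ k, P v k = 1) (horth : ∀ v w, G.Adj v w → ∀ k, P v k * P w k = 0)
    {R : Matrix V V ℝ} (hR : R.PosSemidef) (hRG : ∀ v w, v ≠ w → ¬G.Adj v w → R v w = 0)
    (y : V → ℝ) :
    y ⬝ᵥ R *ᵥ y ≤ Fintype.card ι * (y ⬝ᵥ diagonal R.diag *ᵥ y) := by
  have hpinch := (hR.map_ofReal (𝕜 := 𝕜)).kronecker (PosSemidef.one (n := m))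
    |>.le_card_smul_sum_conj (isHermitian_colorProjection hherm) (sum_colorProjection hsum)
  rw [sum_colorProjection_mul_kronecker_one_mul G hidem hsum horth
    (fun v w hvw hadj => by simp [hRG v w hvw hadj])] at hpinch
  set e : m → 𝕜 := Pi.single (Classical.arbitrary m) 1
  have he : star e ⬝ᵥ e = 1 := by simp [e]
  have h := (le_iff.mp hpinch).dotProduct_mulVec_nonneg (fun p => (y p.1 : 𝕜) * e p.2)
  rwa [sub_mulVec, dotProduct_sub, smul_mulVec, dotProduct_smul, diag_map, Function.comp_def,
    ← diagonal_map RCLike.ofReal_zero, star_dotProduct_map_ofReal_kronecker_one_mulVec _ _ he,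
    star_dotProduct_map_ofReal_kronecker_one_mulVec _ _ he, nsmul_eq_mul,
    ← RCLike.ofReal_natCast, ← RCLike.ofReal_mul, ← RCLike.ofReal_sub, RCLike.ofReal_nonneg,
    sub_nonneg] at h

end ColorProjection

namespace IsQuantumColoring

variable {n d c : ℕ} {G : SimpleGraph (Fin n)} {P : Fin n → Fin c → Matrix (Fin d) (Fin d) ℂ}

theorem two_le (hP : IsQuantumColoring G P) (hd : 0 < d) {v w : Fin n} (hvw : G.Adj v w) :
    2 ≤ c := by
  have : Nonempty (Fin d) := ⟨⟨0, hd⟩⟩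
  obtain ⟨-, -, hsum, horth⟩ := hP
  by_contra! hc
  interval_cases c
  · simpa using hsum v
  · simp only [Fin.sum_univ_one] at hsum
    simpa [hsum] using horth v w hvw 0

theorem dotProduct_mulVec_le (hP : IsQuantumColoring G P) (hd : 0 < d)
    {R : Matrix (Fin n) (Fin n) ℝ} (hR : R.PosSemidef)
    (hRG : ∀ v w, v ≠ w → ¬G.Adj v w → R v w = 0) (y : Fin n → ℝ) :
    y ⬝ᵥ R *ᵥ y ≤ c * (y ⬝ᵥ diagonal R.diag *ᵥ y) := by
  have : Nonempty (Fin d) := ⟨⟨0, hd⟩⟩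
  obtain ⟨hherm, hidem, hsum, horth⟩ := hP
  simpa using dotProduct_mulVec_le_card_mul G hherm hidem hsum horth hR hRG y

theorem iSup_eigenvalues_sub_dotProduct_mulVec_le (hP : IsQuantumColoring G P) (hd : 0 < d)
    {M : Matrix (Fin n) (Fin n) ℝ} (hM : M.IsHermitian)
    (hMG : ∀ v w, v ≠ w → ¬G.Adj v w → M v w = 0) {y : Fin n → ℝ} (hy : y ⬝ᵥ y = 1) :
    (⨆ i, hM.eigenvalues i) - y ⬝ᵥ M *ᵥ y
      ≤ c * ((⨆ i, hM.eigenvalues i) - y ⬝ᵥ diagonal M.diag *ᵥ y) := by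
  have hkey := hP.dotProduct_mulVec_le hd (le_iff.mp hM.le_iSup_eigenvalues_smul_one)
    (fun v w hvw hadj => by simp [one_apply_ne hvw, hMG v w hvw hadj]) y
  have hdiag : diagonal ((⨆ i, hM.eigenvalues i) • 1 - M).diag
      = (⨆ i, hM.eigenvalues i) • 1 - diagonal M.diag := by
    ext i j
    by_cases hij : i = j <;> simp [hij]
  rwa [hdiag, dotProduct_smul_one_sub_mulVec, dotProduct_smul_one_sub_mulVec, hy, mul_one] at hkey

end IsQuantumColoring

/-- The Kolotilina-type bound for the quantum chromatic number:
`c ≥ 1 + μ₁/(μ₁ − δ₁ + θ₁)` where `μ₁ = λ_max(A)`, `θ₁ = λ_max(D−A)` and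
`δ₁ = λ_max(D+A)`. -/
theorem kolotilina_bound_quantum {n d c : ℕ} (hd : 0 < d)
    (G : SimpleGraph (Fin n)) [DecidableRel G.Adj]
    (hm : 1 ≤ G.edgeFinset.card)
    (hA : (G.adjMatrix ℝ).IsHermitian)
    (hL : (Matrix.diagonal (fun v => (G.degree v : ℝ)) - G.adjMatrix ℝ).IsHermitian)
    (hQ : (Matrix.diagonal (fun v => (G.degree v : ℝ)) + G.adjMatrix ℝ).IsHermitian)
    (P : Fin n → Fin c → Matrix (Fin d) (Fin d) ℂ)
    (hP : IsQuantumColoring G P) :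
    1 + (⨆ i, hA.eigenvalues i) /
        ((⨆ i, hA.eigenvalues i) - (⨆ i, hQ.eigenvalues i) + (⨆ i, hL.eigenvalues i))
      ≤ (c : ℝ) := by
  obtain ⟨v, w, hvw⟩ := G.ne_bot_iff_exists_adj.mp
    (SimpleGraph.edgeFinset_nonempty.mp (Finset.card_pos.mp hm))
  have hc : (2 : ℝ) ≤ c := by exact_mod_cast hP.two_le hd hvw
  have : Nonempty (Fin n) := ⟨v⟩
  obtain ⟨y, hy, hQy⟩ := hQ.exists_dotProduct_self_eq_one_mulVec_eq_iSup
  have hkey := hP.iSup_eigenvalues_sub_dotProduct_mulVec_le hd hL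
    (fun v w hvw hadj => by simp [hvw, hadj]) hy
  have hdiag : diagonal (diagonal (fun v => (G.degree v : ℝ)) - G.adjMatrix ℝ).diag
      = diagonal fun v => (G.degree v : ℝ) := by
    ext i j
    by_cases hij : i = j <;> simp [hij]
  rw [hdiag, sub_mulVec, dotProduct_sub] at hkey
  have hμ := le_iff.mp hA.le_iSup_eigenvalues_smul_one
  set μ := ⨆ i, hA.eigenvalues i
  set t := y ⬝ᵥ (diagonal fun v => (G.degree v : ℝ)) *ᵥ y
  set a := y ⬝ᵥ G.adjMatrix ℝ *ᵥ y
  have hδ : t + a = ⨆ i, hQ.eigenvalues i := by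
    rw [← dotProduct_add, ← add_mulVec, hQy, dotProduct_smul, hy, smul_eq_mul, mul_one]
  have ha : a ≤ μ := by
    have h := hμ.dotProduct_mulVec_nonneg y
    rwa [star_trivial, dotProduct_smul_one_sub_mulVec, hy, mul_one, sub_nonneg] at h
  have hμ0 : 0 ≤ μ := by simpa using hμ.diag_nonneg (i := v)
  rcases le_or_gt (μ - (t + a) + ⨆ i, hL.eigenvalues i) 0 with hden | hden
  · rw [← hδ]
    linarith [div_nonpos_of_nonneg_of_nonpos hμ0 hden]
  · rw [← hδ, ← le_sub_iff_add_le', div_le_iff₀ hden]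
    nlinarith [mul_le_mul_of_nonneg_left ha (sub_nonneg.mpr hc)]
end
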